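/- Let g: X → ℝ ∪ {+∞} be a proper generalized polyhedral convex function, h: X → ℝ ∪ {+∞} a lower semicontinuous, proper, convex function, and C ⊆ X a nonempty generalized polyhedral convex set with (dom g) ∩ C ≠ ∅; set f = g − h. Let H be a selection of the subdifferential mapping ∂h on C ∩ dom ∂h, and let G_C be a selection of the subdifferential mapping ∂(g + δ_C)* on dom ∂(g + δ_C)* whose range is a finite set. Suppose sequences {x^k} and {ξ^k} are well-defined for all k ∈ ℕ by: x⁰ ∈ (dom g) ∩ C, ξ^k = H(x^k), x^{k+1} = G_C(ξ^k). Then there exist k̄ ∈ ℕ and p ≥ 1 such that: (a) x^{k+p} = x^k and ξ^{k+p} = ξ^k for every k ≥ k̄; (b) f(x^k) = f(x^{k̄}) for every k ≥ k̄. -/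

import Mathlib

open Pointwise Topology

/-- A generalized polyhedral convex set: the intersection of a closed affine subspace
with finitely many closed half-spaces given by continuous linear functionals. -/
def IsGPCS (X : Type*) [AddCommGroup X] [Module ℝ X] [TopologicalSpace X] (S : Set X) : Prop :=
  ∃ (L : AffineSubspace ℝ X) (p : ℕ) (a : Fin p → (X →L[ℝ] ℝ)) (c : Fin p → ℝ),
    IsClosed (L : Set X) ∧ S = {x : X | x ∈ L ∧ ∀ k, a k x ≤ c k}

/-- The epigraph of an extended-real-valued function. -/
def epigraph {X : Type*} (ψ : X → EReal) : Set (X × ℝ) := {p | ψ p.1 ≤ (p.2 : EReal)}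

/-- A generalized polyhedral convex function: one whose epigraph is a generalized
polyhedral convex set in `X × ℝ`. -/
def IsGPCF (X : Type*) [AddCommGroup X] [Module ℝ X] [TopologicalSpace X] (ψ : X → EReal) : Prop :=
  IsGPCS (X × ℝ) (epigraph ψ)

/-- A proper function: not identically `+∞` and never `-∞`. -/
def ProperFn {X : Type*} (ψ : X → EReal) : Prop := (∃ x, ψ x ≠ ⊤) ∧ ∀ x, ψ x ≠ ⊥

/-- Convexity of an extended-real-valued function, via convexity of the epigraph. -/
def ConvexFn {X : Type*} [AddCommGroup X] [Module ℝ X] (ψ : X → EReal) : Prop :=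
  Convex ℝ (epigraph ψ)

/-- The effective domain of an extended-real-valued function. -/
def domFn {X : Type*} (ψ : X → EReal) : Set X := {x | ψ x ≠ ⊤}

open Classical in
/-- The indicator function of a set: `0` on the set, `+∞` outside. -/
noncomputable def indFn {X : Type*} (C : Set X) : X → EReal := fun x => if x ∈ C then 0 else ⊤

open Classical in
/-- The DC objective `g - h` with the convention `(+∞) - (+∞) = +∞`. -/
noncomputable def dcObj {X : Type*} (g h : X → EReal) : X → EReal :=
  fun x => if g x = ⊤ ∧ h x = ⊤ then ⊤ else g x - h x

/-- The subdifferential (in the sense of convex analysis) of `φ` at `x₀`. -/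
def SubdiffAt {X : Type*} [AddCommGroup X] [Module ℝ X] [TopologicalSpace X]
    (φ : X → EReal) (x₀ : X) : Set (X →L[ℝ] ℝ) :=
  {p | ∀ x : X, ((p x - p x₀ : ℝ) : EReal) ≤ φ x - φ x₀}

/-- The subdifferential of a function defined on the dual space, with values in `X`
(the dual of `X*` in the weak* topology). -/
def SubdiffStarAt {X : Type*} [AddCommGroup X] [Module ℝ X] [TopologicalSpace X]
    (Φ : (X →L[ℝ] ℝ) → EReal) (p₀ : X →L[ℝ] ℝ) : Set X :=
  {x | ∀ p : X →L[ℝ] ℝ, ((p x - p₀ x : ℝ) : EReal) ≤ Φ p - Φ p₀}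

/-- The normal cone to a convex set `C` at `x₀ ∈ C`. -/
def normalConeAt {X : Type*} [AddCommGroup X] [Module ℝ X] [TopologicalSpace X]
    (C : Set X) (x₀ : X) : Set (X →L[ℝ] ℝ) :=
  {p | ∀ x ∈ C, p x - p x₀ ≤ 0}

/-- The Fenchel conjugate function. -/
noncomputable def conjFn {X : Type*} [AddCommGroup X] [Module ℝ X] [TopologicalSpace X]
    (φ : X → EReal) : (X →L[ℝ] ℝ) → EReal :=
  fun p => ⨆ x : X, (((p x : ℝ) : EReal) - φ x)

/-- `x₀` is a local solution of: minimize `g - h` over `C`. -/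
def IsLocalSolution {X : Type*} [TopologicalSpace X] (g h : X → EReal) (C : Set X)
    (x₀ : X) : Prop :=
  x₀ ∈ C ∧ ∃ U ∈ nhds x₀, ∀ x ∈ C ∩ U, dcObj g h x₀ ≤ dcObj g h x

/-- `x₀` is a (global) solution of: minimize `g - h` over `C`. -/
def IsSolution {X : Type*} (g h : X → EReal) (C : Set X) (x₀ : X) : Prop :=
  x₀ ∈ C ∧ ∀ x ∈ C, dcObj g h x₀ ≤ dcObj g h x

/-- `S` is open in the relative topology of `C`. -/
def RelOpenIn {X : Type*} [TopologicalSpace X] (C S : Set X) : Prop :=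
  ∃ V : Set X, IsOpen V ∧ S = C ∩ V

/-- A semi-closed generalized polyhedral convex subset of `C`: the intersection of a
generalized polyhedral convex subset of `C` with a convex subset of `C` that is open
in the relative topology of `C`. -/
def IsSemiClosedGPCSIn {X : Type*} [AddCommGroup X] [Module ℝ X] [TopologicalSpace X]
    (C S : Set X) : Prop :=
  ∃ P Q : Set X, IsGPCS X P ∧ P ⊆ C ∧ Convex ℝ Q ∧ Q ⊆ C ∧ RelOpenIn C Q ∧ S = P ∩ Q

/-! The epigraph of `φ = g + δ_C` is closed and convex, so separating points from it shows that
`x ∈ ∂φ*(ξ)` forces `φ x + φ* ξ ≤ ⟨ξ, x⟩`. Together with the Fenchel–Young inequality at `xᵏ`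
and the subgradient inequality `ξᵏ ∈ ∂h(xᵏ)` this makes `f(xᵏ)` nonincreasing. The iterates
`xᵏ⁺¹ = G(H(xᵏ))` are produced by one fixed map and stay in the finite range of `G`, so they are
eventually periodic; an eventually periodic nonincreasing sequence is eventually constant. -/

namespace IsGPCS

variable {Y : Type*} [AddCommGroup Y] [Module ℝ Y] [TopologicalSpace Y] {S : Set Y}

lemma isClosed (hS : IsGPCS Y S) : IsClosed S := by
  obtain ⟨L, p, a, c, hL, rfl⟩ := hS
  simp only [Set.ofPred_and, Set.ofPred_forall]
  exact hL.inter (isClosed_iInter fun k => isClosed_le (a k).continuous continuous_const)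

lemma convex (hS : IsGPCS Y S) : Convex ℝ S := by
  obtain ⟨L, p, a, c, hL, rfl⟩ := hS
  simp only [Set.ofPred_and, Set.ofPred_forall]
  exact L.convex.inter (convex_iInter fun k => convex_halfSpace_le (a k).toLinearMap.isLinear _)

end IsGPCS

section Indicator

variable {X : Type*} {g h : X → EReal} {C : Set X}

lemma epigraph_add_indFn (hg : ∀ z, g z ≠ ⊥) :
    epigraph (fun z => g z + indFn C z) = epigraph g ∩ C ×ˢ Set.univ := by
  ext ⟨z, t⟩
  by_cases hz : z ∈ C
  · simp [epigraph, indFn, hz]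
  · simp [epigraph, indFn, hz, EReal.add_top_of_ne_bot (hg z)]

lemma dcObj_add_indFn_of_mem {z : X} (hz : z ∈ C) :
    dcObj (fun z => g z + indFn C z) h z = dcObj g h z := by
  simp [dcObj, indFn, hz]

end Indicator

lemma EReal.exists_eq_coe_of_nonneg_sub_self {a : EReal} (ha : 0 ≤ a - a) : ∃ r : ℝ, a = r := by
  induction a using EReal.rec <;> simp_all

section Conjugate

variable {Y : Type*} [AddCommGroup Y] [Module ℝ Y] [TopologicalSpace Y] {φ : Y → EReal}

lemma sub_le_conjFn (φ : Y → EReal) (p : Y →L[ℝ] ℝ) (w : Y) :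
    ((p w : ℝ) : EReal) - φ w ≤ conjFn φ p :=
  le_iSup (fun z => ((p z : ℝ) : EReal) - φ z) w

lemma conjFn_le_coe {p : Y →L[ℝ] ℝ} {r : ℝ} (hφ : ∀ z, φ z ≠ ⊥)
    (h : ∀ w (t : ℝ), φ w ≤ t → p w - t ≤ r) : conjFn φ p ≤ r := by
  refine iSup_le fun w => ?_
  induction hw : φ w using EReal.rec with
  | bot => exact absurd hw (hφ w)
  | coe t => exact_mod_cast h w t hw.le
  | top => simp

lemma exists_eq_coe_of_mem_subdiffAt {h : Y → EReal} {x : Y} {p : Y →L[ℝ] ℝ}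
    (hp : p ∈ SubdiffAt h x) : ∃ b : ℝ, h x = b :=
  EReal.exists_eq_coe_of_nonneg_sub_self (by simpa using hp x)

lemma exists_eq_coe_of_mem_subdiffStarAt {Φ : (Y →L[ℝ] ℝ) → EReal} {q : Y →L[ℝ] ℝ} {y : Y}
    (hy : y ∈ SubdiffStarAt Φ q) : ∃ r : ℝ, Φ q = r :=
  EReal.exists_eq_coe_of_nonneg_sub_self (by simpa using hy q)

lemma properFn_of_conjFn_eq_coe {q : Y →L[ℝ] ℝ} {r : ℝ} (hr : conjFn φ q = r) :
    ProperFn φ := by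
  refine ⟨?_, fun z hz => ?_⟩
  · by_contra! htop
    simp [conjFn, htop] at hr
  · have := hr ▸ sub_le_conjFn φ q z
    simp [hz] at this

lemma nonpos_of_forall_epigraph {x₁ : Y} {a₁ : ℝ} (hx₁ : φ x₁ ≤ a₁) {p : Y →L[ℝ] ℝ} {c u : ℝ}
    (hsep : ∀ w (t : ℝ), φ w ≤ t → p w + c * t < u) : c ≤ 0 := by
  by_contra! hc
  set t := max a₁ ((u - p x₁) / c)
  have h₁ := hsep x₁ t (hx₁.trans (by exact_mod_cast le_max_left _ _))
  have h₂ : (u - p x₁) / c ≤ t := le_max_right _ _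
  rw [div_le_iff₀ hc] at h₂
  linarith

lemma exists_conjFn_le_lt_sub_of_neg (hφ : ∀ z, φ z ≠ ⊥) {p : Y →L[ℝ] ℝ} {c u : ℝ} (hc : c < 0)
    (hsep : ∀ w (t : ℝ), φ w ≤ t → p w + c * t < u) {z : Y} {m : ℝ} (hu : u < p z + c * m) :
    ∃ (p' : Y →L[ℝ] ℝ) (r : ℝ), conjFn φ p' ≤ r ∧ m < p' z - r := by
  have hc' : 0 < -c := neg_pos.2 hc
  have hc0 : c ≠ 0 := hc.ne
  refine ⟨(-c)⁻¹ • p, u / -c, conjFn_le_coe hφ fun w t hwt => ?_, ?_⟩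
  · have hrw : ((-c)⁻¹ • p) w - t = (p w + c * t) / -c := by
      simp only [smul_apply, smul_eq_mul]
      field_simp
      ring
    rw [hrw]
    exact div_le_div_of_nonneg_right (hsep w t hwt).le hc'.le
  · have hrw : ((-c)⁻¹ • p) z - u / -c = m + (p z + c * m - u) / -c := by
      simp only [smul_apply, smul_eq_mul]
      field_simp
      ring
    rw [hrw]
    exact lt_add_of_pos_right m (div_pos (sub_pos.2 hu) hc')

lemma exists_conjFn_le_lt_sub_of_zero (hφ : ∀ z, φ z ≠ ⊥) {p₁ : Y →L[ℝ] ℝ} {r₁ : ℝ}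
    (h₁ : conjFn φ p₁ ≤ r₁) {p : Y →L[ℝ] ℝ} {u : ℝ} (hsep : ∀ w (t : ℝ), φ w ≤ t → p w < u)
    {z : Y} (hu : u < p z) (m : ℝ) :
    ∃ (p' : Y →L[ℝ] ℝ) (r : ℝ), conjFn φ p' ≤ r ∧ m < p' z - r := by
  obtain ⟨n, hn⟩ := exists_nat_gt ((m - p₁ z + r₁) / (p z - u))
  rw [div_lt_iff₀ (sub_pos.2 hu)] at hn
  refine ⟨p₁ + (n : ℝ) • p, r₁ + n * u, conjFn_le_coe hφ fun w t hwt => ?_, ?_⟩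
  · have hp₁ : p₁ w - t ≤ r₁ := by
      have := (EReal.sub_le_sub le_rfl hwt).trans ((sub_le_conjFn φ p₁ w).trans h₁)
      exact_mod_cast this
    have hpn : n * p w ≤ n * u := mul_le_mul_of_nonneg_left (hsep w t hwt).le n.cast_nonneg
    simp only [add_apply, smul_apply, smul_eq_mul]
    linarith
  · simp only [add_apply, smul_apply, smul_eq_mul]
    linarith

end Conjugate

section Separation

variable {Y : Type*} [AddCommGroup Y] [Module ℝ Y] [TopologicalSpace Y]
  [IsTopologicalAddGroup Y] [ContinuousSMul ℝ Y] [LocallyConvexSpace ℝ Y] {φ : Y → EReal}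

lemma exists_separation_of_not_le (hcl : IsClosed (epigraph φ)) (hcv : Convex ℝ (epigraph φ))
    {z : Y} {m : ℝ} (hm : ¬ φ z ≤ m) :
    ∃ (p : Y →L[ℝ] ℝ) (c u : ℝ),
      (∀ w (t : ℝ), φ w ≤ t → p w + c * t < u) ∧ u < p z + c * m := by
  obtain ⟨f, u, hf, hu⟩ := geometric_hahn_banach_closed_point hcv hcl
    (show (z, m) ∉ epigraph φ from hm)
  have hf_apply : ∀ w t, f (w, t) = f.comp (.inl ℝ Y ℝ) w + f (0, 1) * t := by
    intro w t
    have hwt : ((w, t) : Y × ℝ) = (w, 0) + t • (0, 1) := by simp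
    rw [hwt, map_add, map_smul, smul_eq_mul, mul_comm]
    rfl
  exact ⟨f.comp (.inl ℝ Y ℝ), f (0, 1), u, fun w t hwt => hf_apply w t ▸ hf (w, t) hwt,
    hf_apply z m ▸ hu⟩

/- A non-vertical hyperplane separating `(z, m)` from the epigraph yields `p` directly; a vertical
one is tilted by adding a large multiple of it to an affine minorant of `φ`. -/
lemma exists_conjFn_le_lt_sub (hφ : ProperFn φ) (hcl : IsClosed (epigraph φ))
    (hcv : Convex ℝ (epigraph φ)) {z : Y} {m : ℝ} (hm : ¬ φ z ≤ m) :
    ∃ (p : Y →L[ℝ] ℝ) (r : ℝ), conjFn φ p ≤ r ∧ m < p z - r := by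
  obtain ⟨⟨x₁, hx₁⟩, hbot⟩ := hφ
  obtain ⟨a₁, ha₁⟩ : ∃ a₁ : ℝ, φ x₁ = a₁ :=
    ⟨(φ x₁).toReal, (EReal.coe_toReal hx₁ (hbot x₁)).symm⟩
  obtain ⟨p₁, r₁, h₁, -⟩ : ∃ (p₁ : Y →L[ℝ] ℝ) (r₁ : ℝ), conjFn φ p₁ ≤ r₁ ∧ a₁ - 1 < p₁ x₁ - r₁ := by
    have hsub : ¬ φ x₁ ≤ (a₁ - 1 : ℝ) := by
      rw [ha₁, EReal.coe_le_coe_iff]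
      linarith
    obtain ⟨p, c, u, hsep, hu⟩ := exists_separation_of_not_le hcl hcv hsub
    have hc : c < 0 := by
      have := hsep x₁ a₁ ha₁.le
      linarith
    exact exists_conjFn_le_lt_sub_of_neg hbot hc hsep hu
  obtain ⟨p, c, u, hsep, hu⟩ := exists_separation_of_not_le hcl hcv hm
  rcases (nonpos_of_forall_epigraph ha₁.le hsep).lt_or_eq with hc | rfl
  · exact exists_conjFn_le_lt_sub_of_neg hbot hc hsep hu
  · simp only [zero_mul, add_zero] at hsep hu
    exact exists_conjFn_le_lt_sub_of_zero hbot h₁ hsep hu m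

theorem exists_conjFn_eq_coe_and_le_of_mem_subdiffStarAt (hcl : IsClosed (epigraph φ))
    (hcv : Convex ℝ (epigraph φ)) {q : Y →L[ℝ] ℝ} {y : Y}
    (hy : y ∈ SubdiffStarAt (conjFn φ) q) :
    ∃ r : ℝ, conjFn φ q = r ∧ φ y ≤ (q y - r : ℝ) := by
  obtain ⟨r, hr⟩ := exists_eq_coe_of_mem_subdiffStarAt hy
  refine ⟨r, hr, ?_⟩
  by_contra hm
  obtain ⟨p, s, hs, hlt⟩ := exists_conjFn_le_lt_sub (properFn_of_conjFn_eq_coe hr) hcl hcv hm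
  have hle : ((p y - q y : ℝ) : EReal) ≤ (s - r : ℝ) :=
    (hr ▸ hy p).trans (EReal.sub_le_sub hs le_rfl)
  have := EReal.coe_le_coe_iff.1 hle
  linarith

theorem dcObj_le_of_mem_subdiffAt_of_mem_subdiffStarAt (hcl : IsClosed (epigraph φ))
    (hcv : Convex ℝ (epigraph φ)) {h : Y → EReal} {x y : Y} {ξ : Y →L[ℝ] ℝ}
    (hξ : ξ ∈ SubdiffAt h x) (hy : y ∈ SubdiffStarAt (conjFn φ) ξ)
    (hhy : (SubdiffAt h y).Nonempty) : dcObj φ h y ≤ dcObj φ h x := by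
  obtain ⟨r, hr, hφy⟩ := exists_conjFn_eq_coe_and_le_of_mem_subdiffStarAt hcl hcv hy
  have hbot := (properFn_of_conjFn_eq_coe hr).2
  obtain ⟨a, ha⟩ : ∃ a : ℝ, φ y = a :=
    ⟨(φ y).toReal, (EReal.coe_toReal (ne_top_of_le_ne_top (EReal.coe_ne_top _) hφy)
      (hbot y)).symm⟩
  obtain ⟨b, hb⟩ := exists_eq_coe_of_mem_subdiffAt hξ
  obtain ⟨b', hb'⟩ := exists_eq_coe_of_mem_subdiffAt hhy.some_mem
  have hsub : ξ y - ξ x ≤ b' - b := by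
    have := hξ y
    rw [hb, hb'] at this
    exact_mod_cast this
  have hay : a ≤ ξ y - r := by
    rw [ha] at hφy
    exact_mod_cast hφy
  induction hx : φ x using EReal.rec with
  | bot => exact absurd hx (hbot x)
  | top => simp [dcObj, hx, hb]
  | coe a' =>
    have hyoung : ξ x - a' ≤ r := by
      have := sub_le_conjFn φ ξ x
      rw [hx, hr] at this
      exact_mod_cast this
    simp only [dcObj, ha, hb, hb', hx, EReal.coe_ne_top, and_false, if_false]
    exact_mod_cast (by linarith : a - b' ≤ a' - b)

end Separation

lemma exists_periodic_of_finite_range {α : Type*} {T : α → α} {x : ℕ → α}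
    (hx : ∀ k, x (k + 1) = T (x k)) (hfin : (Set.range x).Finite) :
    ∃ k₀ p, 0 < p ∧ ∀ k, k₀ ≤ k → x (k + p) = x k := by
  obtain ⟨a, b, hab, heq⟩ := hfin.exists_lt_map_eq_of_forall_mem Set.mem_range_self
  have hshift : ∀ d, x (a + d) = x (b + d) := by
    intro d
    induction d with
    | zero => exact heq
    | succ d ih => rw [← add_assoc, ← add_assoc, hx, hx, ih]
  refine ⟨a, b - a, by omega, fun k hk => ?_⟩
  obtain ⟨d, rfl⟩ := Nat.exists_eq_add_of_le hk
  rw [show a + d + (b - a) = b + d by omega, hshift]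

lemma Antitone.eq_of_periodic {β : Type*} [PartialOrder β] {F : ℕ → β} (hF : Antitone F)
    {k₀ p : ℕ} (hp : 0 < p) (hper : ∀ k, k₀ ≤ k → F (k + p) = F k) :
    ∀ k, k₀ ≤ k → F k = F k₀ := by
  have hiter : ∀ n, F (k₀ + n * p) = F k₀ := by
    intro n
    induction n with
    | zero => simp
    | succ n ih => rw [add_mul, one_mul, ← add_assoc, hper _ (by omega), ih]
  intro k hk
  refine le_antisymm (hF hk) ?_
  calc F k₀ = F (k₀ + k * p) := (hiter k).symm
    _ ≤ F k := hF (le_add_left (Nat.le_mul_of_pos_right k hp))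

theorem stmt18_general {X : Type*} [AddCommGroup X] [Module ℝ X] [TopologicalSpace X]
    [IsTopologicalAddGroup X] [ContinuousSMul ℝ X] [LocallyConvexSpace ℝ X]
    (g h : X → EReal)
    (hg2 : ProperFn g) (hg3 : IsGPCF X g)
    (C : Set X) (hC2 : IsGPCS X C)
    -- `H` is a selection of `∂h` on `C ∩ dom ∂h`
    (H : X → (X →L[ℝ] ℝ))
    (hHsel : ∀ z ∈ C, (SubdiffAt h z).Nonempty → H z ∈ SubdiffAt h z)
    -- `G` is a selection of `∂(g + δ_C)*` on `dom ∂(g + δ_C)*` with finite range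
    (G : (X →L[ℝ] ℝ) → X)
    (hGsel : ∀ q : X →L[ℝ] ℝ,
      (SubdiffStarAt (conjFn (fun z => g z + indFn C z)) q).Nonempty →
        G q ∈ SubdiffStarAt (conjFn (fun z => g z + indFn C z)) q)
    (hGfin : (G '' {q : X →L[ℝ] ℝ |
      (SubdiffStarAt (conjFn (fun z => g z + indFn C z)) q).Nonempty}).Finite)
    -- the DCA sequences, well-defined for all `k`
    (x : ℕ → X) (ξ : ℕ → (X →L[ℝ] ℝ))
    (hxC : ∀ k : ℕ, x k ∈ C)
    (hxdom : ∀ k : ℕ, (SubdiffAt h (x k)).Nonempty)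
    (hξdef : ∀ k : ℕ, ξ k = H (x k))
    (hξdom : ∀ k : ℕ,
      (SubdiffStarAt (conjFn (fun z => g z + indFn C z)) (ξ k)).Nonempty)
    (hxsucc : ∀ k : ℕ, x (k + 1) = G (ξ k)) :
    ∃ (k₀ p : ℕ), 1 ≤ p ∧
      (∀ k : ℕ, k₀ ≤ k → x (k + p) = x k ∧ ξ (k + p) = ξ k) ∧
      (∀ k : ℕ, k₀ ≤ k → dcObj g h (x k) = dcObj g h (x k₀)) := by
  have hepi := epigraph_add_indFn (C := C) hg2.2
  have hcl : IsClosed (epigraph fun z => g z + indFn C z) :=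
    hepi ▸ hg3.isClosed.inter (hC2.isClosed.prod isClosed_univ)
  have hcv : Convex ℝ (epigraph fun z => g z + indFn C z) :=
    hepi ▸ hg3.convex.inter (hC2.convex.prod convex_univ)
  have hdesc : Antitone fun k => dcObj g h (x k) := by
    refine antitone_nat_of_succ_le fun k => ?_
    rw [← dcObj_add_indFn_of_mem (hxC k), ← dcObj_add_indFn_of_mem (hxC (k + 1))]
    refine dcObj_le_of_mem_subdiffAt_of_mem_subdiffStarAt (ξ := ξ k) hcl hcv ?_ ?_ (hxdom (k + 1))
    · exact hξdef k ▸ hHsel _ (hxC k) (hxdom k)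
    · exact hxsucc k ▸ hGsel _ (hξdom k)
  have hrange : (Set.range x).Finite := by
    refine (hGfin.insert (x 0)).subset ?_
    rintro _ ⟨_ | k, rfl⟩
    · exact Set.mem_insert _ _
    · exact Set.mem_insert_of_mem _ ⟨ξ k, hξdom k, (hxsucc k).symm⟩
  obtain ⟨k₀, p, hp, hper⟩ := exists_periodic_of_finite_range (T := G ∘ H)
    (fun k => by rw [hxsucc, hξdef, Function.comp_apply]) hrange
  refine ⟨k₀, p, hp, fun k hk => ⟨hper k hk, by rw [hξdef, hξdef, hper k hk]⟩,
    hdesc.eq_of_periodic hp fun k hk => congrArg (dcObj g h) (hper k hk)⟩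

/-- cyclic behavior of DCA sequences generated by selections, when `g` is
generalized polyhedral convex and `C` is a generalized polyhedral convex set (so that a
finite-range selection `G_C` of `∂(g + δ_C)*` exists). -/
theorem stmt18 {X : Type*} [AddCommGroup X] [Module ℝ X] [TopologicalSpace X]
    [IsTopologicalAddGroup X] [ContinuousSMul ℝ X] [LocallyConvexSpace ℝ X] [T2Space X]
    (g h : X → EReal)
    (hg2 : ProperFn g) (hg3 : IsGPCF X g)
    (hh1 : LowerSemicontinuous h) (hh2 : ProperFn h) (hh3 : ConvexFn h)
    (C : Set X) (hC1 : C.Nonempty) (hC2 : IsGPCS X C)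
    (hdom : (domFn g ∩ C).Nonempty)
    -- `H` is a selection of `∂h` on `C ∩ dom ∂h`
    (H : X → (X →L[ℝ] ℝ))
    (hHsel : ∀ z ∈ C, (SubdiffAt h z).Nonempty → H z ∈ SubdiffAt h z)
    (hHdep : ∀ z w : X, SubdiffAt h z = SubdiffAt h w → H z = H w)
    -- `G` is a selection of `∂(g + δ_C)*` on `dom ∂(g + δ_C)*` with finite range
    (G : (X →L[ℝ] ℝ) → X)
    (hGsel : ∀ q : X →L[ℝ] ℝ,
      (SubdiffStarAt (conjFn (fun z => g z + indFn C z)) q).Nonempty →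
        G q ∈ SubdiffStarAt (conjFn (fun z => g z + indFn C z)) q)
    (hGdep : ∀ q r : X →L[ℝ] ℝ,
      SubdiffStarAt (conjFn (fun z => g z + indFn C z)) q =
          SubdiffStarAt (conjFn (fun z => g z + indFn C z)) r →
        G q = G r)
    (hGfin : (G '' {q : X →L[ℝ] ℝ |
      (SubdiffStarAt (conjFn (fun z => g z + indFn C z)) q).Nonempty}).Finite)
    -- the DCA sequences, well-defined for all `k`
    (x : ℕ → X) (ξ : ℕ → (X →L[ℝ] ℝ))
    (hx0 : x 0 ∈ domFn g ∩ C)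
    (hxC : ∀ k : ℕ, x k ∈ C)
    (hxdom : ∀ k : ℕ, (SubdiffAt h (x k)).Nonempty)
    (hξdef : ∀ k : ℕ, ξ k = H (x k))
    (hξdom : ∀ k : ℕ,
      (SubdiffStarAt (conjFn (fun z => g z + indFn C z)) (ξ k)).Nonempty)
    (hxsucc : ∀ k : ℕ, x (k + 1) = G (ξ k)) :
    ∃ (k₀ p : ℕ), 1 ≤ p ∧
      (∀ k : ℕ, k₀ ≤ k → x (k + p) = x k ∧ ξ (k + p) = ξ k) ∧
      (∀ k : ℕ, k₀ ≤ k → dcObj g h (x k) = dcObj g h (x k₀)) :=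
  stmt18_general g h hg2 hg3 C hC2 H hHsel G hGsel hGfin x ξ hxC hxdom hξdef hξdom hxsucc
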